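/- arXiv:1807.08292 — 3 statements merged into one kernel-verified Lean document; each statement's English description precedes it below -/
import Mathlib

section
/- Let λ be a balanced partition with r rows and c columns, and let f be any toggle-symmetric probability distribution on the subshapes of λ. Then the expected jaggedness Σ_μ f(μ)·jag(μ), summed over all subshapes μ of λ, equals 2rc/(r+c). -/
open Polynomial

/-- The set of cells of the Young diagram of the partition with parts
`lam 1 ≥ lam 2 ≥ … ≥ lam r`, i.e. pairs `(i,j)` with `1 ≤ i ≤ r` and `1 ≤ j ≤ lam i`. -/
def cells (lam : ℕ → ℕ) (r : ℕ) : Set (ℕ × ℕ) :=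
  {p | 1 ≤ p.1 ∧ p.1 ≤ r ∧ 1 ≤ p.2 ∧ p.2 ≤ lam p.1}

/-- `lam` restricted to indices `1,…,r` is a partition with `r` (positive) parts. -/
def IsPartition (lam : ℕ → ℕ) (r : ℕ) : Prop :=
  (∀ i, 1 ≤ i → i + 1 ≤ r → lam (i + 1) ≤ lam i) ∧ (∀ i, 1 ≤ i → i ≤ r → 1 ≤ lam i)

/-- A partition with `r` rows and `c = lam 1` columns is balanced if every outward corner
of its southeast boundary lies on the main anti-diagonal:
whenever `1 ≤ i < r` and `lam (i+1) < lam i`, one has `lam 1 * (r - i) = r * lam (i+1)`. -/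
def IsBalanced (lam : ℕ → ℕ) (r : ℕ) : Prop :=
  ∀ i, 1 ≤ i → i < r → lam (i + 1) < lam i → lam 1 * (r - i) = r * lam (i + 1)

/-- Flagged semistandard Young tableaux of shape `lam` (with `r` rows):
positive entries, weakly increasing along rows, strictly increasing down columns,
entries in row `i` at most `k + i`; entries outside the diagram are normalized to `0`. -/
def SYT (lam : ℕ → ℕ) (r k : ℕ) : Set ((ℕ × ℕ) → ℕ) :=
  {T | (∀ p, p ∉ cells lam r → T p = 0) ∧
       (∀ p ∈ cells lam r, 1 ≤ T p ∧ T p ≤ k + p.1) ∧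
       (∀ i j, (i, j) ∈ cells lam r → (i, j + 1) ∈ cells lam r → T (i, j) ≤ T (i, j + 1)) ∧
       (∀ i j, (i, j) ∈ cells lam r → (i + 1, j) ∈ cells lam r → T (i, j) < T (i + 1, j))}

/-- Flagged barely set-valued semistandard Young tableaux of shape `lam` (with `r` rows):
finite nonempty sets of positive integers in each cell, exactly one cell receiving a
two-element set and all other cells singletons, weakly increasing along rows
(`A ≤ B` iff every element of `A` is at most every element of `B`) and strictly
increasing down columns, every entry in row `i` at most `k + i`;
cells outside the diagram are normalized to `∅`. -/
def BSSYT (lam : ℕ → ℕ) (r k : ℕ) : Set ((ℕ × ℕ) → Finset ℕ) :=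
  {T | (∀ p, p ∉ cells lam r → T p = ∅) ∧
       (∃ B ∈ cells lam r, (T B).card = 2 ∧ ∀ p ∈ cells lam r, p ≠ B → (T p).card = 1) ∧
       (∀ p ∈ cells lam r, ∀ x ∈ T p, 1 ≤ x ∧ x ≤ k + p.1) ∧
       (∀ i j, (i, j) ∈ cells lam r → (i, j + 1) ∈ cells lam r →
          ∀ x ∈ T (i, j), ∀ y ∈ T (i, j + 1), x ≤ y) ∧
       (∀ i j, (i, j) ∈ cells lam r → (i + 1, j) ∈ cells lam r →
          ∀ x ∈ T (i, j), ∀ y ∈ T (i + 1, j), x < y)}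

/-- Reverse plane partitions of shape `lam` (with `r` rows) with entries in `{0,…,k}`:
weakly increasing along rows and down columns; entries outside the diagram normalized to `0`. -/
def RPP (lam : ℕ → ℕ) (r k : ℕ) : Set ((ℕ × ℕ) → ℕ) :=
  {P | (∀ p, p ∉ cells lam r → P p = 0) ∧
       (∀ p ∈ cells lam r, P p ≤ k) ∧
       (∀ i j, (i, j) ∈ cells lam r → (i, j + 1) ∈ cells lam r → P (i, j) ≤ P (i, j + 1)) ∧
       (∀ i j, (i, j) ∈ cells lam r → (i + 1, j) ∈ cells lam r → P (i, j) ≤ P (i + 1, j))}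

/-- A subshape of `lam`: a down-closed subset of the cells of `lam`
(i.e. a Young diagram contained in `lam`). -/
def IsSubshape (lam : ℕ → ℕ) (r : ℕ) (μ : Set (ℕ × ℕ)) : Prop :=
  μ ⊆ cells lam r ∧
  ∀ p ∈ μ, ∀ q : ℕ × ℕ, 1 ≤ q.1 → q.1 ≤ p.1 → 1 ≤ q.2 → q.2 ≤ p.2 → q ∈ μ

/-- The induced subshape `α(P,i)`: cells of `lam` whose entry in `P` is strictly less than `i`. -/
def alphaShape (lam : ℕ → ℕ) (r : ℕ) (P : (ℕ × ℕ) → ℕ) (i : ℕ) : Set (ℕ × ℕ) :=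
  {p | p ∈ cells lam r ∧ P p < i}

/-- A corner of a subshape `μ`: a cell of `μ` such that the cells immediately below
and to the right are not in `μ`. -/
def IsShapeCorner (μ : Set (ℕ × ℕ)) (p : ℕ × ℕ) : Prop :=
  p ∈ μ ∧ (p.1 + 1, p.2) ∉ μ ∧ (p.1, p.2 + 1) ∉ μ

/-- A proper outside corner of a subshape `μ` of `lam`: a cell of `lam` not in `μ` whose
upper neighbour is in `μ` (or which lies in the first row) and whose left neighbour is
in `μ` (or which lies in the first column). -/
def IsProperOutsideCorner (lam : ℕ → ℕ) (r : ℕ) (μ : Set (ℕ × ℕ)) (p : ℕ × ℕ) : Prop :=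
  p ∈ cells lam r ∧ p ∉ μ ∧
  ((p.1 - 1, p.2) ∈ μ ∨ p.1 = 1) ∧ ((p.1, p.2 - 1) ∈ μ ∨ p.2 = 1)

/-- The jaggedness of a subshape `μ` of `lam`: the number of corners of `μ` plus the
number of proper outside corners of `μ`. -/
noncomputable def jag (lam : ℕ → ℕ) (r : ℕ) (μ : Set (ℕ × ℕ)) : ℕ :=
  {p | IsShapeCorner μ p}.ncard + {p | IsProperOutsideCorner lam r μ p}.ncard

/-- `p` can be toggled into the subshape `μ`. -/
def ToggleIn (lam : ℕ → ℕ) (r : ℕ) (μ : Set (ℕ × ℕ)) (p : ℕ × ℕ) : Prop :=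
  p ∉ μ ∧ IsSubshape lam r (insert p μ)

/-- `p` can be toggled out of the subshape `μ`. -/
def ToggleOut (lam : ℕ → ℕ) (r : ℕ) (μ : Set (ℕ × ℕ)) (p : ℕ × ℕ) : Prop :=
  p ∈ μ ∧ IsSubshape lam r (μ \ {p})

/-- The `j`-th part of the rectangular staircase partition `δ_d(b^a)`,
namely `b * (d - ⌈j/a⌉)`. -/
def deltaSC (a b d : ℕ) : ℕ → ℕ := fun j => b * (d - (j + a - 1) / a)

/-!
Write `c = λ₁` and `ℓ(x, y) = c x + r y - r c`, which vanishes on the antidiagonal of the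
`r × c` rectangle. Walking along the boundary of a subshape `μ`, the corners of `μ` are the outer
turns (at the lower right vertex `(i, j)` of the cell) and the proper outside corners are the
inner turns (at the upper left vertex `(i - 1, j - 1)`); the remaining inner turns are inner
corners of `λ`, which lie on the antidiagonal because `λ` is balanced. Hence the sum of `ℓ` over
the outer turns minus its sum over the inner turns telescopes, row by row, to `r c`.
Since `ℓ(i, j) - ℓ(i - 1, j - 1) = r + c`, this writes `(r + c) jag μ` as `2 r c` plus a fixed
linear combination of the toggleability statistics `T_p(μ)`, and toggle-symmetry says exactly
that every `T_p` has expectation zero.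
-/

open Finset
open scoped Classical

section

variable {lam : ℕ → ℕ} {r : ℕ} {μ : Set (ℕ × ℕ)} {i j : ℕ} {p : ℕ × ℕ}

lemma IsPartition.antitoneOn (hpart : IsPartition lam r) : AntitoneOn lam (Set.Icc 1 r) :=
  antitoneOn_of_succ_le Set.ordConnected_Icc fun i _ hi hsi => hpart.1 i hi.1 hsi.2

def cellBox (lam : ℕ → ℕ) (r : ℕ) : Finset (ℕ × ℕ) :=
  Icc 1 r ×ˢ Icc 1 (lam 1)

lemma cells_subset_cellBox (hpart : IsPartition lam r) : cells lam r ⊆ cellBox lam r := by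
  rintro ⟨i, j⟩ ⟨hi, hir, hj, hjl⟩
  simp only [cellBox, coe_product, coe_Icc, Set.mem_prod, Set.mem_Icc]
  exact ⟨⟨hi, hir⟩, hj, hjl.trans (hpart.antitoneOn ⟨le_rfl, hi.trans hir⟩ ⟨hi, hir⟩ hi)⟩

lemma finite_setOf_isSubshape (hpart : IsPartition lam r) :
    {μ | IsSubshape lam r μ}.Finite :=
  (cellBox lam r).finite_toSet.finite_subsets.subset
    fun _ hμ => hμ.1.trans (cells_subset_cellBox hpart)

lemma IsSubshape.toggleOut_iff (hμ : IsSubshape lam r μ) :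
    ToggleOut lam r μ p ↔ IsShapeCorner μ p := by
  obtain ⟨i, j⟩ := p
  constructor
  · rintro ⟨hp, -, hdown⟩
    have hi := (hμ.1 hp).1
    have hj := (hμ.1 hp).2.2.1
    refine ⟨hp, fun hD => ?_, fun hR => ?_⟩
    · simpa using hdown (i + 1, j) ⟨hD, by simp⟩ (i, j) hi (Nat.le_succ i) hj le_rfl
    · simpa using hdown (i, j + 1) ⟨hR, by simp⟩ (i, j) hi le_rfl hj (Nat.le_succ j)
  · rintro ⟨hp, hD, hR⟩
    refine ⟨hp, fun _ hq => hμ.1 hq.1, ?_⟩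
    rintro ⟨a, b⟩ ⟨hab, habne⟩ ⟨x, y⟩ hx hxa hy hyb
    refine ⟨hμ.2 _ hab _ hx hxa hy hyb, ?_⟩
    rintro hxy
    simp only [Set.mem_singleton_iff, Prod.mk.injEq] at hxy habne
    obtain ⟨rfl, rfl⟩ := hxy
    rcases Nat.lt_or_ge x a with h | h
    · exact hD (hμ.2 _ hab (x + 1, y) (by omega) h hy hyb)
    · exact hR (hμ.2 _ hab (x, y + 1) hx hxa (by omega) (by simp at hxa hyb; omega))

lemma IsSubshape.toggleIn_iff (hμ : IsSubshape lam r μ) :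
    ToggleIn lam r μ p ↔ IsProperOutsideCorner lam r μ p := by
  obtain ⟨i, j⟩ := p
  constructor
  · rintro ⟨hp, hsub, hdown⟩
    have hcell : (i, j) ∈ cells lam r := hsub (Set.mem_insert _ _)
    have below : ∀ q : ℕ × ℕ, q ≠ (i, j) → 1 ≤ q.1 → q.1 ≤ i → 1 ≤ q.2 → q.2 ≤ j → q ∈ μ :=
      fun q hq h1 h2 h3 h4 => (hdown _ (Set.mem_insert _ _) q h1 h2 h3 h4).resolve_left hq
    refine ⟨hcell, hp, ?_, ?_⟩
    · rcases Nat.lt_or_ge 1 i with h | h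
      · exact .inl (below _ (by simp; omega) (by simp; omega) (by simp) hcell.2.2.1 le_rfl)
      · exact .inr (by have := hcell.1; simp at h ⊢; omega)
    · rcases Nat.lt_or_ge 1 j with h | h
      · exact .inl (below _ (by simp; omega) hcell.1 le_rfl (by simp; omega) (by simp))
      · exact .inr (by have := hcell.2.2.1; simp at h ⊢; omega)
  · rintro ⟨hcell, hp, hup, hleft⟩
    refine ⟨hp, Set.insert_subset hcell hμ.1, ?_⟩
    rintro ⟨a, b⟩ hab ⟨x, y⟩ hx hxa hy hyb
    simp only at hx hxa hy hyb
    rcases hab with hab | hab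
    · simp only [Prod.mk.injEq] at hab
      obtain ⟨rfl, rfl⟩ := hab
      by_cases hxy : x = a ∧ y = b
      · simp [hxy]
      refine .inr ?_
      rcases Nat.lt_or_ge x a with h | h
      · exact hμ.2 _ (hup.resolve_right (by omega)) (x, y) hx (by simp; omega) hy hyb
      · exact hμ.2 _ (hleft.resolve_right (by omega)) (x, y) hx hxa hy (by simp; omega)
    · exact .inr (hμ.2 _ hab (x, y) hx hxa hy hyb)

-- An empty row gets length `sSup ∅ = 0`.
noncomputable def rowLen (μ : Set (ℕ × ℕ)) (i : ℕ) : ℕ :=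
  sSup {j | (i, j) ∈ μ}

lemma IsSubshape.mem_iff_le_rowLen (hμ : IsSubshape lam r μ) :
    (i, j) ∈ μ ↔ 1 ≤ j ∧ j ≤ rowLen μ i := by
  have hbdd : BddAbove {j | (i, j) ∈ μ} := ⟨lam i, fun _ h => (hμ.1 h).2.2.2⟩
  refine ⟨fun h => ⟨(hμ.1 h).2.2.1, le_csSup hbdd h⟩, fun ⟨hj, hjm⟩ => ?_⟩
  have hne : {j | (i, j) ∈ μ}.Nonempty := by
    by_contra hempty
    rw [Set.not_nonempty_iff_eq_empty] at hempty
    simp only [rowLen, hempty, csSup_empty, bot_eq_zero'] at hjm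
    omega
  have hmem : (i, rowLen μ i) ∈ μ := Nat.sSup_mem hne hbdd
  exact hμ.2 _ hmem (i, j) (hμ.1 hmem).1 le_rfl hj hjm

lemma IsSubshape.rowLen_mem (hμ : IsSubshape lam r μ) (h : 0 < rowLen μ i) :
    (i, rowLen μ i) ∈ μ :=
  hμ.mem_iff_le_rowLen.2 ⟨h, le_rfl⟩

lemma IsSubshape.rowLen_le (hμ : IsSubshape lam r μ) : rowLen μ i ≤ lam i := by
  rcases Nat.eq_zero_or_pos (rowLen μ i) with h | h
  · omega
  · exact (hμ.1 (hμ.rowLen_mem h)).2.2.2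

lemma IsSubshape.rowLen_succ_le (hμ : IsSubshape lam r μ) (hi : 1 ≤ i) :
    rowLen μ (i + 1) ≤ rowLen μ i := by
  rcases Nat.eq_zero_or_pos (rowLen μ (i + 1)) with h | h
  · omega
  · have hmem := hμ.rowLen_mem h
    exact (hμ.mem_iff_le_rowLen.1 (hμ.2 _ hmem (i, _) hi (by simp) h le_rfl)).2

lemma IsSubshape.rowLen_eq_zero (hμ : IsSubshape lam r μ) (hi : r < i) : rowLen μ i = 0 := by
  by_contra h
  have := (hμ.1 (hμ.rowLen_mem (Nat.pos_of_ne_zero h))).2.1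
  omega

lemma IsSubshape.isShapeCorner_iff (hμ : IsSubshape lam r μ) :
    IsShapeCorner μ (i, j) ↔ rowLen μ (i + 1) < rowLen μ i ∧ j = rowLen μ i := by
  simp only [IsShapeCorner, hμ.mem_iff_le_rowLen]
  omega

lemma IsSubshape.isProperOutsideCorner_iff (hμ : IsSubshape lam r μ) :
    IsProperOutsideCorner lam r μ (i, j) ↔
      (1 ≤ i ∧ i ≤ r ∧ rowLen μ i < lam i ∧ (i = 1 ∨ rowLen μ i < rowLen μ (i - 1))) ∧
        j = rowLen μ i + 1 := by
  simp only [IsProperOutsideCorner, cells, Set.mem_ofPred_eq, hμ.mem_iff_le_rowLen]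
  omega

noncomputable def antidiagForm (r c : ℕ) (x y : ℝ) : ℝ :=
  c * x + r * y - r * c

lemma antidiagForm_sub_antidiagForm (r c : ℕ) (x y : ℝ) :
    antidiagForm r c x y - antidiagForm r c (x - 1) (y - 1) = r + c := by
  unfold antidiagForm
  ring

lemma IsBalanced.antidiagForm_eq_zero (hbal : IsBalanced lam r) (hi : 1 ≤ i)
    (hir : i < r) (hlt : lam (i + 1) < lam i) :
    antidiagForm r (lam 1) i (lam (i + 1)) = 0 := by
  have h : ((lam 1 * (r - i) : ℕ) : ℝ) = (r * lam (i + 1) : ℕ) := congrArg _ (hbal i hi hir hlt)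
  push_cast [Nat.cast_sub hir.le] at h
  unfold antidiagForm
  linarith

theorem IsBalanced.sum_turningPoints (hbal : IsBalanced lam r) {m : ℕ → ℕ}
    (hm : ∀ i, 1 ≤ i → m (i + 1) ≤ m i) (hml : ∀ i, m i ≤ lam i) (hmr : m (r + 1) = 0) :
    ∑ i ∈ Icc 1 r, ((if m (i + 1) < m i then antidiagForm r (lam 1) i (m i) else 0) -
      (if m i < lam i ∧ (i = 1 ∨ m i < m (i - 1)) then
        antidiagForm r (lam 1) (i - 1) (m i) else 0)) = r * lam 1 := by
  set a : ℕ → ℝ := fun i => if m (i + 1) < m i then antidiagForm r (lam 1) i (m i) else 0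
  set b : ℕ → ℝ := fun i => if m i < lam i ∧ (i = 1 ∨ m i < m (i - 1)) then
    antidiagForm r (lam 1) (i - 1) (m i) else 0
  have step : ∀ i, 1 ≤ i → i < r → a i - b (i + 1) = r * ((m i : ℝ) - m (i + 1)) := by
    intro i hi hir
    have hle := hm i hi
    have hfall : m (i + 1) = lam (i + 1) → m (i + 1) < m i →
        antidiagForm r (lam 1) i (m (i + 1)) = 0 := fun heq hlt => by
      rw [heq]; exact hbal.antidiagForm_eq_zero hi hir (by have := hml i; omega)
    simp only [a, b, Nat.add_sub_cancel, show i + 1 ≠ 1 by omega, false_or]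
    split_ifs with h₁ h₂ h₂
    · push_cast; unfold antidiagForm; ring
    · have h0 := hfall (by have := hml (i + 1); omega) h₁
      unfold antidiagForm at h0 ⊢; linarith
    · exact absurd h₂.2 h₁
    · rw [show m (i + 1) = m i by omega]; ring
  have partial_sum : ∀ n, 1 ≤ n → n ≤ r →
      ∑ i ∈ Icc 1 n, (a i - b i) = r * ((lam 1 : ℝ) - m n) + a n := by
    intro n hn
    induction n, hn using Nat.le_induction with
    | base =>
      intro _
      have := hml 1
      simp only [Icc_self, sum_singleton, b, true_or, and_true]
      split_ifs with h
      · unfold antidiagForm; push_cast; ring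
      · rw [show m 1 = lam 1 by omega]; ring
    | succ n hn ih =>
      intro hnr
      rw [sum_Icc_succ_top (by omega), ih (by omega)]
      linarith [step n hn (by omega)]
  rcases Nat.eq_zero_or_pos r with rfl | hr
  · simp
  have hlast : a r = r * m r := by
    simp only [a, hmr]
    split_ifs with h
    · unfold antidiagForm; ring
    · simp [show m r = 0 by omega]
  rw [partial_sum r hr le_rfl, hlast]
  ring

lemma sum_cellBox_ite (hpart : IsPartition lam r) {Q : ℕ × ℕ → Prop} {P : ℕ → Prop}
    {g : ℕ → ℕ} (F : ℕ × ℕ → ℝ) (hQ : ∀ p ∈ cellBox lam r, Q p ↔ P p.1 ∧ p.2 = g p.1)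
    (hg : ∀ i ∈ Icc 1 r, P i → 1 ≤ g i ∧ g i ≤ lam i) :
    ∑ p ∈ cellBox lam r, (if Q p then F p else 0) =
      ∑ i ∈ Icc 1 r, if P i then F (i, g i) else 0 := by
  rw [sum_congr rfl fun p hp => if_congr (hQ p hp) rfl rfl, cellBox, sum_product]
  refine sum_congr rfl fun i hi => ?_
  by_cases hP : P i
  · obtain ⟨hg1, hgl⟩ := hg i hi hP
    rw [mem_Icc] at hi
    have hgc : g i ∈ Icc 1 (lam 1) :=
      mem_Icc.2 ⟨hg1, hgl.trans (hpart.antitoneOn ⟨le_rfl, hi.1.trans hi.2⟩ hi hi.1)⟩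
    simp [hP, hgc]
  · simp [hP]

theorem IsSubshape.sum_corners_sub_sum_properOutsideCorners (hpart : IsPartition lam r)
    (hbal : IsBalanced lam r) (hμ : IsSubshape lam r μ) :
    ∑ p ∈ cellBox lam r, ((if IsShapeCorner μ p then antidiagForm r (lam 1) p.1 p.2 else 0) -
      (if IsProperOutsideCorner lam r μ p then
        antidiagForm r (lam 1) (p.1 - 1) (p.2 - 1) else 0)) = r * lam 1 := by
  have hbox : ∀ p ∈ cellBox lam r, 1 ≤ p.1 ∧ p.1 ≤ r := fun p hp => by
    simp only [cellBox, mem_product, mem_Icc] at hp; exact hp.1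
  rw [sum_sub_distrib,
    sum_cellBox_ite hpart (P := fun i => rowLen μ (i + 1) < rowLen μ i) (g := rowLen μ) _
      (fun p _ => hμ.isShapeCorner_iff) (fun i _ h => ⟨by omega, hμ.rowLen_le⟩),
    sum_cellBox_ite hpart
      (P := fun i => rowLen μ i < lam i ∧ (i = 1 ∨ rowLen μ i < rowLen μ (i - 1)))
      (g := fun i => rowLen μ i + 1) _
      (fun p hp => by rw [hμ.isProperOutsideCorner_iff]; simp [hbox p hp])
      (fun i _ h => ⟨by omega, h.1⟩),
    ← sum_sub_distrib]
  convert hbal.sum_turningPoints (m := rowLen μ) (fun i hi => hμ.rowLen_succ_le hi)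
    (fun i => hμ.rowLen_le) (hμ.rowLen_eq_zero (by omega)) using 4
  simp only [Nat.cast_add, Nat.cast_one, add_sub_cancel_right]

noncomputable def toggleability (lam : ℕ → ℕ) (r : ℕ) (μ : Set (ℕ × ℕ)) (p : ℕ × ℕ) : ℝ :=
  (if ToggleIn lam r μ p then 1 else 0) - (if ToggleOut lam r μ p then 1 else 0)

lemma IsSubshape.toggleability_eq_zero (hμ : IsSubshape lam r μ) (hp : p ∉ cells lam r) :
    toggleability lam r μ p = 0 := by
  have hin : ¬ ToggleIn lam r μ p := fun h => hp (h.2.1 (Set.mem_insert _ _))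
  have hout : ¬ ToggleOut lam r μ p := fun h => hp (hμ.1 h.1)
  simp [toggleability, hin, hout]

lemma IsSubshape.jag_eq_sum (hpart : IsPartition lam r) (hμ : IsSubshape lam r μ) :
    (jag lam r μ : ℝ) = ∑ p ∈ cellBox lam r,
      ((if IsShapeCorner μ p then 1 else 0) +
        (if IsProperOutsideCorner lam r μ p then 1 else 0)) := by
  have hcorner : {p | IsShapeCorner μ p} = ↑((cellBox lam r).filter (IsShapeCorner μ)) := by
    ext p
    simpa using fun h => cells_subset_cellBox hpart (hμ.1 h.1)
  have hpoc : {p | IsProperOutsideCorner lam r μ p} =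
      ↑((cellBox lam r).filter (IsProperOutsideCorner lam r μ)) := by
    ext p
    simpa using fun h => cells_subset_cellBox hpart h.1
  rw [jag, hcorner, hpoc, Set.ncard_coe_finset, Set.ncard_coe_finset, sum_add_distrib,
    sum_boole, sum_boole, Nat.cast_add]

theorem IsSubshape.jag_eq (hpart : IsPartition lam r) (hbal : IsBalanced lam r)
    (hμ : IsSubshape lam r μ) :
    ((r : ℝ) + lam 1) * jag lam r μ = 2 * r * lam 1 + ∑ p ∈ cellBox lam r,
      (antidiagForm r (lam 1) p.1 p.2 + antidiagForm r (lam 1) (p.1 - 1) (p.2 - 1)) *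
        toggleability lam r μ p := by
  rw [hμ.jag_eq_sum hpart, mul_sum, mul_assoc,
    ← hμ.sum_corners_sub_sum_properOutsideCorners hpart hbal, mul_sum, ← sum_add_distrib]
  refine sum_congr rfl fun p _ => ?_
  have hℓ := antidiagForm_sub_antidiagForm r (lam 1) p.1 p.2
  rw [toggleability, hμ.toggleIn_iff, hμ.toggleOut_iff]
  split_ifs <;> linarith

end

lemma finsum_mem_setOf_and_eq_sum {α : Type*} {Q P : α → Prop} (hQ : {x | Q x}.Finite)
    (f : α → ℝ) :
    ∑ᶠ x ∈ {x | Q x ∧ P x}, f x = ∑ x ∈ hQ.toFinset, if P x then f x else 0 := by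
  have hset : {x | Q x ∧ P x} = ↑(hQ.toFinset.filter P) := by
    ext x
    simp
  rw [hset, finsum_mem_coe_finset, sum_filter]

theorem expected_jaggedness_toggle_symmetric_general (lam : ℕ → ℕ) (r c : ℕ)
    (hpart : IsPartition lam r) (hbal : IsBalanced lam r) (hc : c = lam 1)
    (f : Set (ℕ × ℕ) → ℝ)
    (hsupp : ∀ μ, ¬ IsSubshape lam r μ → f μ = 0)
    (hsum : ∑ᶠ μ, f μ = 1)
    (hts : ∀ p ∈ cells lam r,
      (∑ᶠ μ ∈ {μ | IsSubshape lam r μ ∧ ToggleIn lam r μ p}, f μ)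
        = ∑ᶠ μ ∈ {μ | IsSubshape lam r μ ∧ ToggleOut lam r μ p}, f μ) :
    ((r : ℝ) + c) * (∑ᶠ μ ∈ {μ | IsSubshape lam r μ}, f μ * (jag lam r μ : ℝ))
      = 2 * r * c := by
  subst hc
  have hS := finite_setOf_isSubshape hpart
  have hmass : ∑ μ ∈ hS.toFinset, f μ = 1 := by
    rw [← hsum, finsum_eq_sum_of_support_subset]
    intro μ hμ
    simpa using not_imp_comm.1 (hsupp μ) hμ
  have hmean : ∀ p, ∑ μ ∈ hS.toFinset, f μ * toggleability lam r μ p = 0 := by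
    intro p
    by_cases hp : p ∈ cells lam r
    · have h := hts p hp
      rw [finsum_mem_setOf_and_eq_sum hS, finsum_mem_setOf_and_eq_sum hS] at h
      simp only [toggleability, mul_sub, mul_ite, mul_one, mul_zero, sum_sub_distrib, h, sub_self]
    · exact sum_eq_zero fun μ hμ => by
        rw [(hS.mem_toFinset.1 hμ).toggleability_eq_zero hp, mul_zero]
  calc ((r : ℝ) + lam 1) * ∑ᶠ μ ∈ {μ | IsSubshape lam r μ}, f μ * jag lam r μ
      = ∑ μ ∈ hS.toFinset, f μ * (2 * r * lam 1 + ∑ p ∈ cellBox lam r,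
          (antidiagForm r (lam 1) p.1 p.2 + antidiagForm r (lam 1) (p.1 - 1) (p.2 - 1)) *
            toggleability lam r μ p) := by
        rw [finsum_mem_eq_finite_toFinset_sum _ hS, mul_sum]
        refine sum_congr rfl fun μ hμ => ?_
        rw [← (hS.mem_toFinset.1 hμ).jag_eq hpart hbal]
        ring
    _ = 2 * r * lam 1 := by
        simp only [mul_add, mul_sum, sum_add_distrib, ← sum_mul, hmass, one_mul]
        rw [sum_comm]
        simp only [mul_left_comm (f _), ← mul_sum, hmean, mul_zero, sum_const_zero, add_zero]

/-- Chan–Haddadan–Hopkins–Moci, Corollary 3.8: for a balanced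
partition `λ` with `r` rows and `c` columns and any toggle-symmetric probability
distribution `f` on the subshapes of `λ`, the expected jaggedness is `2rc/(r+c)`. -/
theorem expected_jaggedness_toggle_symmetric (lam : ℕ → ℕ) (r c : ℕ)
    (hpart : IsPartition lam r) (hbal : IsBalanced lam r) (hc : c = lam 1)
    (f : Set (ℕ × ℕ) → ℝ)
    (hnn : ∀ μ, 0 ≤ f μ)
    (hsupp : ∀ μ, ¬ IsSubshape lam r μ → f μ = 0)
    (hsum : ∑ᶠ μ, f μ = 1)
    (hts : ∀ p ∈ cells lam r,
      (∑ᶠ μ ∈ {μ | IsSubshape lam r μ ∧ ToggleIn lam r μ p}, f μ)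
        = ∑ᶠ μ ∈ {μ | IsSubshape lam r μ ∧ ToggleOut lam r μ p}, f μ) :
    ((r : ℝ) + c) * (∑ᶠ μ ∈ {μ | IsSubshape lam r μ}, f μ * (jag lam r μ : ℝ))
      = 2 * r * c :=
  expected_jaggedness_toggle_symmetric_general lam r c hpart hbal hc f hsupp hsum hts
end

section
/- Let T ∈ BSSYT(λ,k) and let B be the unique cell of T containing a two-element set {a,b} with a < b, located in row r₀. Let T′ be the filling obtained from T by subtracting t from every entry in row t, and let P be the filling obtained from T′ by deleting the entry b − r₀ from cell B. Then r₀ ≤ a < b ≤ k + r₀ (so 1 ≤ b − r₀ ≤ k), P ∈ RPP(λ,k), and B is a corner of the induced subshape α(P, b − r₀). -/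
open Polynomial

lemma tcell_nonempty {lam : ℕ → ℕ} {r k : ℕ} {T : (ℕ × ℕ) → Finset ℕ}
    (hT : T ∈ BSSYT lam r k) {p : ℕ × ℕ} (hp : p ∈ cells lam r) : (T p).Nonempty := by
  obtain ⟨-, ⟨B', hB', hc2, hc1⟩, -⟩ := hT
  rcases eq_or_ne p B' with h | h
  · exact Finset.card_pos.mp (by rw [h, hc2]; norm_num)
  · exact Finset.card_pos.mp (by rw [hc1 p hp h]; norm_num)

lemma entry_ge_row {lam : ℕ → ℕ} {r k : ℕ} (hpart : IsPartition lam r)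
    {T : (ℕ × ℕ) → Finset ℕ} (hT : T ∈ BSSYT lam r k) :
    ∀ i j, (i, j) ∈ cells lam r → ∀ x ∈ T (i, j), i ≤ x := by
  intro i
  induction i with
  | zero => intro j hj; exact absurd hj.1 (by norm_num)
  | succ n ih =>
    intro j hj x hx
    rcases Nat.eq_zero_or_pos n with h0 | hpos
    · subst h0; exact (hT.2.2.1 _ hj x hx).1
    · obtain ⟨h1, h2, h3, h4⟩ := hj
      have hcell : (n, j) ∈ cells lam r :=
        ⟨hpos, by omega, h3, le_trans h4 (hpart.1 n hpos (by omega))⟩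
      obtain ⟨y, hy⟩ := tcell_nonempty hT hcell
      have h5 := hT.2.2.2.2 n j hcell ⟨h1, h2, h3, h4⟩ y hy x hx
      have h6 := ih j hcell y hy
      omega

/-- the forward construction in the proof of Theorem 3.2:
if `T ∈ BSSYT(λ,k)` has its doubleton `{a,b}` (`a < b`) in cell `B` in row `r₀`,
and `P` is obtained by subtracting `t` from every entry in row `t` and deleting
`b - r₀` from cell `B`, then `r₀ ≤ a < b ≤ k + r₀`, `1 ≤ b - r₀ ≤ k`, `P ∈ RPP(λ,k)`,
and `B` is a corner of `α(P, b - r₀)`. -/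
theorem bssyt_to_rpp_corner (lam : ℕ → ℕ) (r k : ℕ)
    (hpart : IsPartition lam r) (hk : 1 ≤ k)
    (T : (ℕ × ℕ) → Finset ℕ) (hT : T ∈ BSSYT lam r k)
    (B : ℕ × ℕ) (hB : B ∈ cells lam r)
    (a b r0 : ℕ) (hab : a < b) (hTB : T B = {a, b}) (hr0 : B.1 = r0)
    (P : (ℕ × ℕ) → ℕ)
    (hP1 : ∀ p ∈ cells lam r, p ≠ B → (T p).image (fun x => x - p.1) = {P p})
    (hP2 : P B = a - r0)
    (hP3 : ∀ p, p ∉ cells lam r → P p = 0) :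
    r0 ≤ a ∧ b ≤ k + r0 ∧ 1 ≤ b - r0 ∧ b - r0 ≤ k ∧
    P ∈ RPP lam r k ∧ IsShapeCorner (alphaShape lam r P (b - r0)) B := by
  obtain ⟨B1, B2⟩ := B
  simp only at hr0
  subst hr0
  -- basic facts about a and b
  have haB : a ∈ T (B1, B2) := by rw [hTB]; simp
  have hbB : b ∈ T (B1, B2) := by rw [hTB]; simp
  have ha_ge : B1 ≤ a := entry_ge_row hpart hT B1 B2 hB a haB
  have hb_le : b ≤ k + B1 := (hT.2.2.1 _ hB b hbB).2
  -- P on non-B cells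
  have hPval : ∀ p ∈ cells lam r, p ≠ (B1, B2) → ∀ x ∈ T p, P p = x - p.1 := by
    intro p hp hne x hx
    have h := hP1 p hp hne
    have hmem : x - p.1 ∈ ({P p} : Finset ℕ) := h ▸ Finset.mem_image_of_mem _ hx
    exact (Finset.mem_singleton.mp hmem).symm
  refine ⟨ha_ge, hb_le, by omega, by omega, ?_, ?_⟩
  · -- P ∈ RPP
    refine ⟨hP3, ?_, ?_, ?_⟩
    · intro p hp
      rcases eq_or_ne p (B1, B2) with h | h
      · rw [h, hP2]; omega
      · obtain ⟨x, hx⟩ := tcell_nonempty hT hp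
        have := (hT.2.2.1 p hp x hx).2
        rw [hPval p hp h x hx]; omega
    · -- rows
      intro i j h1 h2
      have hrow := hT.2.2.2.1 i j h1 h2
      rcases eq_or_ne (i, j) (B1, B2) with hL | hL
      · have hne : (i, j + 1) ≠ (B1, B2) := by
          intro h; rw [← hL] at h; simp at h
        obtain ⟨y, hy⟩ := tcell_nonempty hT h2
        have h3 := hrow a (hL ▸ haB) y hy
        have h4 := entry_ge_row hpart hT i j h1 a (hL ▸ haB)
        rw [hL, hP2, hPval _ h2 hne y hy]
        have : i = B1 := congrArg Prod.fst hL
        omega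
      · rcases eq_or_ne (i, j + 1) (B1, B2) with hR | hR
        · obtain ⟨x, hx⟩ := tcell_nonempty hT h1
          have h3 := hrow x hx a (hR ▸ haB)
          rw [hR, hP2, hPval _ h1 hL x hx]
          have : i = B1 := congrArg Prod.fst hR
          omega
        · obtain ⟨x, hx⟩ := tcell_nonempty hT h1
          obtain ⟨y, hy⟩ := tcell_nonempty hT h2
          have h3 := hrow x hx y hy
          rw [hPval _ h1 hL x hx, hPval _ h2 hR y hy]
          omega
    · -- columns
      intro i j h1 h2
      have hcol := hT.2.2.2.2 i j h1 h2
      rcases eq_or_ne (i, j) (B1, B2) with hL | hL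
      · have hne : (i + 1, j) ≠ (B1, B2) := by
          intro h
          have := congrArg Prod.fst h; have := congrArg Prod.fst hL
          simp_all
        obtain ⟨y, hy⟩ := tcell_nonempty hT h2
        have h3 := hcol a (hL ▸ haB) y hy
        have h4 := entry_ge_row hpart hT i j h1 a (hL ▸ haB)
        rw [hL, hP2, hPval _ h2 hne y hy]
        have : i = B1 := congrArg Prod.fst hL
        omega
      · rcases eq_or_ne (i + 1, j) (B1, B2) with hR | hR
        · obtain ⟨x, hx⟩ := tcell_nonempty hT h1
          have h3 := hcol x hx a (hR ▸ haB)
          have h4 := entry_ge_row hpart hT i j h1 x hx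
          rw [hR, hP2, hPval _ h1 hL x hx]
          have : i + 1 = B1 := congrArg Prod.fst hR
          omega
        · obtain ⟨x, hx⟩ := tcell_nonempty hT h1
          obtain ⟨y, hy⟩ := tcell_nonempty hT h2
          have h3 := hcol x hx y hy
          have h4 := entry_ge_row hpart hT i j h1 x hx
          rw [hPval _ h1 hL x hx, hPval _ h2 hR y hy]
          omega
  · -- corner of alpha shape
    refine ⟨⟨hB, by rw [hP2]; omega⟩, ?_, ?_⟩
    · rintro ⟨hcell, hlt⟩
      simp only at hcell hlt
      have hne : ((B1, B2).1 + 1, (B1, B2).2) ≠ (B1, B2) := by simp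
      obtain ⟨y, hy⟩ := tcell_nonempty hT hcell
      have h3 := hT.2.2.2.2 B1 B2 hB hcell b hbB y hy
      rw [hPval _ hcell hne y hy] at hlt
      simp only at hlt
      omega
    · rintro ⟨hcell, hlt⟩
      simp only at hcell hlt
      have hne : ((B1, B2).1, (B1, B2).2 + 1) ≠ (B1, B2) := by simp
      obtain ⟨y, hy⟩ := tcell_nonempty hT hcell
      have h3 := hT.2.2.2.1 B1 B2 hB hcell b hbB y hy
      rw [hPval _ hcell hne y hy] at hlt
      simp only at hlt
      omega
end

section
/- Let T ∈ BSSYT(λ,k) and let B be the unique cell of T containing a two-element set {a,b} with a < b, located in row r₀. Let T′ be the filling obtained from T by subtracting t from every entry in row t, and let Q be the filling obtained from T′ by deleting the entry a − r₀ from cell B. Then 1 ≤ a − r₀ + 1 ≤ k, Q ∈ RPP(λ,k), and B is a proper outside corner of the induced subshape α(Q, a − r₀ + 1). -/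
open Polynomial

/-- the forward construction in the proof of Theorem 3.3:
if `T ∈ BSSYT(λ,k)` has its doubleton `{a,b}` (`a < b`) in cell `B` in row `r₀`,
and `Q` is obtained by subtracting `t` from every entry in row `t` and deleting
`a - r₀` from cell `B`, then `1 ≤ a - r₀ + 1 ≤ k`, `Q ∈ RPP(λ,k)`, and `B` is a
proper outside corner of `α(Q, a - r₀ + 1)`. -/
theorem bssyt_to_rpp_outside_corner (lam : ℕ → ℕ) (r k : ℕ)
    (hpart : IsPartition lam r) (hk : 1 ≤ k)
    (T : (ℕ × ℕ) → Finset ℕ) (hT : T ∈ BSSYT lam r k)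
    (B : ℕ × ℕ) (hB : B ∈ cells lam r)
    (a b r0 : ℕ) (hab : a < b) (hTB : T B = {a, b}) (hr0 : B.1 = r0)
    (Q : (ℕ × ℕ) → ℕ)
    (hQ1 : ∀ p ∈ cells lam r, p ≠ B → (T p).image (fun x => x - p.1) = {Q p})
    (hQ2 : Q B = b - r0)
    (hQ3 : ∀ p, p ∉ cells lam r → Q p = 0) :
    r0 ≤ a ∧ 1 ≤ a - r0 + 1 ∧ a - r0 + 1 ≤ k ∧
    Q ∈ RPP lam r k ∧
    IsProperOutsideCorner lam r (alphaShape lam r Q (a - r0 + 1)) B := by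
  obtain ⟨hT0, ⟨B', hB', hcard2', hcard1⟩, hbd, hrow, hcol⟩ := hT
  have hcardB : (T B).card = 2 := by
    rw [hTB]; exact Finset.card_pair hab.ne
  have hBB' : B' = B := by
    by_contra h
    have := hcard1 B hB (Ne.symm h)
    omega
  rw [hBB'] at hcard1
  have hne : ∀ p ∈ cells lam r, (T p).Nonempty := by
    intro p hp
    rcases eq_or_ne p B with rfl | h
    · exact Finset.card_pos.mp (by omega)
    · exact Finset.card_pos.mp (by rw [hcard1 p hp h]; omega)
  have haB : a ∈ T B := by rw [hTB]; simp
  have hbB : b ∈ T B := by rw [hTB]; simp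
  have hx : ∀ p ∈ cells lam r, p ≠ B → ∀ x ∈ T p, Q p = x - p.1 := by
    intro p hp hpB x hxp
    have h1 := hQ1 p hp hpB
    have h2 : x - p.1 ∈ ({Q p} : Finset ℕ) := h1 ▸ Finset.mem_image_of_mem _ hxp
    exact (Finset.mem_singleton.mp h2).symm
  have hcells : ∀ p : ℕ × ℕ, p ∈ cells lam r ↔
      (1 ≤ p.1 ∧ p.1 ≤ r ∧ 1 ≤ p.2 ∧ p.2 ≤ lam p.1) := fun p => Iff.rfl
  have hge : ∀ i j, (i, j) ∈ cells lam r → ∀ x ∈ T (i, j), i ≤ x := by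
    intro i
    induction i with
    | zero => intro j hj; exact absurd ((hcells _).mp hj).1 (by omega)
    | succ n ih =>
      intro j hj x hxm
      rcases Nat.eq_zero_or_pos n with h0 | h0
      · subst h0; exact (hbd _ hj x hxm).1
      · have hj' := (hcells _).mp hj
        have hcell : (n, j) ∈ cells lam r := (hcells _).mpr
          ⟨h0, by omega, hj'.2.2.1, le_trans hj'.2.2.2 (hpart.1 n h0 hj'.2.1)⟩
        obtain ⟨x', hx'⟩ := hne (n, j) hcell
        have h1 := hcol n j hcell hj x' hx' x hxm
        have h2 := ih j hcell x' hx'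
        omega
  obtain ⟨b1, b2⟩ := B
  simp only at hr0
  subst hr0
  have hra : b1 ≤ a := hge b1 b2 hB a haB
  have hbk : b ≤ k + b1 := (hbd _ hB b hbB).2
  have hB' := (hcells _).mp hB
  refine ⟨hra, by omega, by omega, ?_, ?_⟩
  · refine ⟨hQ3, ?_, ?_, ?_⟩
    · intro p hp
      rcases eq_or_ne p (b1, b2) with rfl | h
      · rw [hQ2]; omega
      · obtain ⟨x, hxm⟩ := hne p hp
        rw [hx p hp h x hxm]
        have := (hbd p hp x hxm).2
        omega
    · intro i j h1 h2
      rcases eq_or_ne ((i, j) : ℕ × ℕ) (b1, b2) with he | he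
      · rw [he, hQ2]
        have he' : i = b1 ∧ j = b2 := Prod.mk.injEq .. ▸ he
        obtain ⟨x, hxm⟩ := hne _ h2
        have h3 : (i, j + 1) ≠ ((b1, b2) : ℕ × ℕ) := by
          simp [Prod.ext_iff]; omega
        rw [hx _ h2 h3 x hxm]
        have := hrow i j h1 h2 b (he ▸ hbB) x hxm
        simp only
        omega
      · obtain ⟨x, hxm⟩ := hne _ h1
        rw [hx _ h1 he x hxm]
        rcases eq_or_ne ((i, j + 1) : ℕ × ℕ) (b1, b2) with he2 | he2
        · rw [he2, hQ2]
          have he2' : i = b1 ∧ j + 1 = b2 := Prod.mk.injEq .. ▸ he2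
          have := hrow i j h1 h2 x hxm b (he2 ▸ hbB)
          simp only
          omega
        · obtain ⟨y, hym⟩ := hne _ h2
          rw [hx _ h2 he2 y hym]
          have := hrow i j h1 h2 x hxm y hym
          simp only
          exact Nat.sub_le_sub_right this i
    · intro i j h1 h2
      rcases eq_or_ne ((i, j) : ℕ × ℕ) (b1, b2) with he | he
      · rw [he, hQ2]
        have he' : i = b1 ∧ j = b2 := Prod.mk.injEq .. ▸ he
        obtain ⟨y, hym⟩ := hne _ h2
        have h3 : (i + 1, j) ≠ ((b1, b2) : ℕ × ℕ) := by
          simp [Prod.ext_iff]; omega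
        rw [hx _ h2 h3 y hym]
        have := hcol i j h1 h2 b (he ▸ hbB) y hym
        simp only
        omega
      · obtain ⟨x, hxm⟩ := hne _ h1
        rw [hx _ h1 he x hxm]
        rcases eq_or_ne ((i + 1, j) : ℕ × ℕ) (b1, b2) with he2 | he2
        · rw [he2, hQ2]
          have he2' : i + 1 = b1 ∧ j = b2 := Prod.mk.injEq .. ▸ he2
          have := hcol i j h1 h2 x hxm b (he2 ▸ hbB)
          simp only
          omega
        · obtain ⟨y, hym⟩ := hne _ h2
          rw [hx _ h2 he2 y hym]
          have := hcol i j h1 h2 x hxm y hym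
          simp only
          omega
  · refine ⟨hB, ?_, ?_, ?_⟩
    · intro hmem
      have := hmem.2
      rw [hQ2] at this
      omega
    · rcases eq_or_ne b1 1 with h1 | h1
      · exact Or.inr h1
      · left
        have hb1 : 2 ≤ b1 := by omega
        have hcellu : ((b1 - 1, b2) : ℕ × ℕ) ∈ cells lam r := (hcells _).mpr
          ⟨by omega, by omega, hB'.2.2.1, by
            have := hpart.1 (b1 - 1) (by omega) (by omega)
            simp only
            have heq : b1 - 1 + 1 = b1 := by omega
            rw [heq] at this
            exact le_trans hB'.2.2.2 this⟩
        obtain ⟨x, hxm⟩ := hne _ hcellu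
        have hne2 : ((b1 - 1, b2) : ℕ × ℕ) ≠ (b1, b2) := by
          simp [Prod.ext_iff]; omega
        have hxa : x < a := by
          have := hcol (b1 - 1) b2 hcellu (by
            have heq : b1 - 1 + 1 = b1 := by omega
            rw [heq]; exact hB) x hxm a (by
            have heq : b1 - 1 + 1 = b1 := by omega
            rw [heq]; exact haB)
          exact this
        refine ⟨hcellu, ?_⟩
        rw [hx _ hcellu hne2 x hxm]
        simp only
        omega
    · rcases eq_or_ne b2 1 with h1 | h1
      · exact Or.inr h1
      · left
        have hcelll : ((b1, b2 - 1) : ℕ × ℕ) ∈ cells lam r := (hcells _).mpr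
          ⟨hB'.1, hB'.2.1, by omega, by
            show b2 - 1 ≤ lam b1
            have h : b2 ≤ lam b1 := hB'.2.2.2
            omega⟩
        obtain ⟨x, hxm⟩ := hne _ hcelll
        have hne2 : ((b1, b2 - 1) : ℕ × ℕ) ≠ (b1, b2) := by
          simp [Prod.ext_iff]; omega
        have hxa : x ≤ a := by
          have heq : b2 - 1 + 1 = b2 := by omega
          have := hrow b1 (b2 - 1) hcelll (by rw [heq]; exact hB) x hxm a (by
            rw [heq]; exact haB)
          exact this
        refine ⟨hcelll, ?_⟩
        rw [hx _ hcelll hne2 x hxm]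
        simp only
        omega
end
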